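/- Let n ≥ 2, let K, L ∈ 𝒦₀(ℝⁿ), and let q ∈ ℝ with 0 < |q| ≤ n. Then |Ṽ_q(K) + Ṽ_q(L) − 2·Ṽ_q(K∩L)| = V_{|q|}(Dₙ) · ∫_{S^{n−1}} |ρ_K(u)^q − ρ_L(u)^q| dσ(u) = (|q|·V_{|q|}(Dₙ)/(n·|Dₙ|)) · ∫_{K△L} ‖x‖^{q−n} dx. Moreover, if q > 0 then the quantity Ṽ_q(K) + Ṽ_q(L) − 2·Ṽ_q(K∩L) is itself nonnegative, so the absolute value may be omitted. -/

import Mathlib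

open MeasureTheory

/-- The uniform (rotation invariant) probability measure `σ` on the unit sphere
`S^{n-1} ⊆ ℝⁿ`. -/
noncomputable def sphereProb (n : ℕ) :
    Measure (Metric.sphere (0 : EuclideanSpace ℝ (Fin n)) 1) :=
  ((volume : Measure (EuclideanSpace ℝ (Fin n))).toSphere Set.univ)⁻¹ •
    (volume : Measure (EuclideanSpace ℝ (Fin n))).toSphere

/-- The radial function `ρ_K(u) = max {r : r • u ∈ K}` of a set `K ⊆ ℝⁿ`. -/
noncomputable def radialFn {n : ℕ} (K : Set (EuclideanSpace ℝ (Fin n)))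
    (u : EuclideanSpace ℝ (Fin n)) : ℝ :=
  sSup {r : ℝ | r • u ∈ K}

/-- `V_s(Dₙ) = π^{s/2}·Γ(n+1)·Γ((n-s)/2+1) / (Γ(s+1)·Γ(n-s+1)·Γ(n/2+1))`, the analytic
extension of the `s`-th intrinsic volume of the unit ball `Dₙ` to real `s ∈ [0,n]`. -/
noncomputable def Vball (n : ℕ) (s : ℝ) : ℝ :=
  Real.pi ^ (s / 2) * Real.Gamma ((n : ℝ) + 1) * Real.Gamma (((n : ℝ) - s) / 2 + 1) /
    (Real.Gamma (s + 1) * Real.Gamma ((n : ℝ) - s + 1) * Real.Gamma ((n : ℝ) / 2 + 1))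

/-- The `q`-th dual volume `Ṽ_q(K) = V_{|q|}(Dₙ) ∫_{S^{n-1}} ρ_K(u)^q dσ(u)`
for `|q| ≤ n`. -/
noncomputable def dualVol (n : ℕ) (q : ℝ) (K : Set (EuclideanSpace ℝ (Fin n))) : ℝ :=
  Vball n |q| * ∫ u : Metric.sphere (0 : EuclideanSpace ℝ (Fin n)) 1,
    radialFn K ↑u ^ q ∂(sphereProb n)

open Metric Set

/-!
Along the ray through a unit vector `u`, a body `K ∈ 𝒦₀` is the segment `[0, ρ_K(u)]` with
`ρ_K = 1 / gauge K`. Hence `ρ_{K∩L} = min(ρ_K, ρ_L)`, and the ray meets `K △ L` in the interval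
`(min(ρ_K, ρ_L), max(ρ_K, ρ_L)]`. The integrand of the dual volume deviation is therefore
`max^q - min^q = sign q · |ρ_K^q - ρ_L^q|`, which gives the first and the last claim. In polar
coordinates `dx = n|Dₙ| r^{n-1} dr dσ(u)`, and the radial integral of `r^{q-n} r^{n-1}` over that
interval is `(max^q - min^q) / q`, which gives the second.
-/

theorem apply_max_add_apply_min {α β : Type*} [LinearOrder α] [AddCommMagma β] (f : α → β)
    (a b : α) : f (max a b) + f (min a b) = f a + f b := by
  rcases le_total a b with h | h <;> simp [h, add_comm]

theorem rpow_max_sub_rpow_min {a b : ℝ} (ha : 0 < a) (hb : 0 < b) (q : ℝ) :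
    max a b ^ q - min a b ^ q = SignType.sign q * |a ^ q - b ^ q| := by
  wlog hab : a ≤ b generalizing a b
  · rw [max_comm, min_comm, abs_sub_comm]
    exact this hb ha (le_of_not_ge hab)
  rw [max_eq_right hab, min_eq_left hab, abs_sub_comm]
  rcases lt_trichotomy q 0 with hq | rfl | hq
  · rw [sign_neg hq, abs_of_nonpos (sub_nonpos.2 (Real.rpow_le_rpow_of_nonpos ha hab hq.le))]
    simp
  · simp
  · rw [sign_pos hq, abs_of_nonneg (sub_nonneg.2 (Real.rpow_le_rpow ha.le hab hq.le))]
    simp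

theorem abs_coe_sign_of_ne_zero {α : Type*} [Ring α] [LinearOrder α] [IsStrictOrderedRing α]
    {x : α} (hx : x ≠ 0) : |(SignType.sign x : α)| = 1 := by
  rcases hx.lt_or_gt with h | h
  · simp [sign_neg h]
  · simp [sign_pos h]

theorem integral_Ioc_rpow_sub_one {m M q : ℝ} (hm : 0 < m) (hmM : m ≤ M) (hq : q ≠ 0) :
    ∫ r in Ioc m M, r ^ (q - 1) = (M ^ q - m ^ q) / q := by
  rw [← intervalIntegral.integral_of_le hmM, integral_rpow (Or.inr ⟨by simpa [sub_eq_iff_eq_add]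
    using hq, fun h => by rw [uIcc_of_le hmM] at h; exact h.1.not_gt hm⟩), sub_add_cancel]

theorem Vball_pos {n : ℕ} {s : ℝ} (hs : 0 ≤ s) (hsn : s ≤ n) : 0 < Vball n s := by
  have hΓ : ∀ {x : ℝ}, 0 < x → 0 < Real.Gamma x := Real.Gamma_pos_of_pos
  unfold Vball
  have := hΓ (show (0 : ℝ) < n + 1 by positivity)
  have := hΓ (show (0 : ℝ) < (n - s) / 2 + 1 by linarith)
  have := hΓ (show (0 : ℝ) < s + 1 by linarith)
  have := hΓ (show (0 : ℝ) < n - s + 1 by linarith)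
  have := hΓ (show (0 : ℝ) < n / 2 + 1 by positivity)
  have := Real.rpow_pos_of_pos Real.pi_pos (s / 2)
  positivity

section PolarCoordinates

variable {E F : Type*} [NormedAddCommGroup E] [NormedSpace ℝ E] [MeasurableSpace E] [BorelSpace E]
  [FiniteDimensional ℝ E] [NormedAddCommGroup F] [NormedSpace ℝ F]

theorem MeasureTheory.Measure.integral_volumeIoiPow (k : ℕ) (g : ℝ → F) :
    ∫ r : Ioi (0 : ℝ), g r ∂Measure.volumeIoiPow k = ∫ r in Ioi (0 : ℝ), r ^ k • g r := by
  simp only [Measure.volumeIoiPow, ENNReal.ofReal]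
  rw [integral_withDensity_eq_integral_smul ((measurable_subtype_coe.pow_const _).real_toNNReal),
    integral_subtype_comap measurableSet_Ioi fun r => (r ^ k).toNNReal • g r]
  refine setIntegral_congr_fun measurableSet_Ioi fun r hr => ?_
  rw [NNReal.smul_def, Real.coe_toNNReal _ (pow_nonneg (le_of_lt hr) _)]

theorem integral_eq_integral_toSphere_integral_Ioi [Nontrivial E] (μ : Measure E)
    [μ.IsAddHaarMeasure] {f : E → F} (hf : Integrable f μ) :
    ∫ x, f x ∂μ = ∫ u : sphere (0 : E) 1,
      (∫ r in Ioi (0 : ℝ), r ^ (Module.finrank ℝ E - 1) • f (r • (u : E))) ∂μ.toSphere := by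
  have hmp := μ.measurePreserving_homeomorphUnitSphereProd
  have hm0 : MeasurableSet ({0}ᶜ : Set E) := (measurableSet_singleton 0).compl
  set g : sphere (0 : E) 1 × Ioi (0 : ℝ) → F := fun y => f ((y.2 : ℝ) • (y.1 : E))
  have hg : ∀ x : ({0}ᶜ : Set E), g (homeomorphUnitSphereProd E x) = f x := fun x => by
    simp only [g, homeomorphUnitSphereProd_apply_snd_coe, homeomorphUnitSphereProd_apply_fst_coe,
      smul_inv_smul₀ (norm_ne_zero_iff.2 x.2)]
  have hg_int :
      Integrable g (μ.toSphere.prod (Measure.volumeIoiPow (Module.finrank ℝ E - 1))) := by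
    rw [← hmp.integrable_comp_emb (Homeomorph.measurableEmbedding _), Function.comp_def, funext hg]
    exact (integrableOn_iff_comap_subtypeVal hm0).1 hf.integrableOn
  calc ∫ x, f x ∂μ = ∫ x : ({0}ᶜ : Set E), f x ∂μ.comap (↑) := by
        rw [integral_subtype_comap hm0, restrict_compl_singleton]
    _ = ∫ y, g y ∂(μ.toSphere.prod (Measure.volumeIoiPow (Module.finrank ℝ E - 1))) := by
        rw [← hmp.integral_comp (Homeomorph.measurableEmbedding _) g]
        exact integral_congr_ae (ae_of_all _ fun x => (hg x).symm)
    _ = _ := by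
        rw [integral_prod g hg_int]
        exact integral_congr_ae
          (ae_of_all _ fun u => Measure.integral_volumeIoiPow _ fun r => f (r • (u : E)))

end PolarCoordinates

section SphereMeasure

variable {n : ℕ} [NeZero n]

theorem toSphere_univ_ne_zero :
    (volume : Measure (EuclideanSpace ℝ (Fin n))).toSphere univ ≠ 0 := by
  rw [Measure.toSphere_apply_univ, finrank_euclideanSpace_fin]
  exact mul_ne_zero (Nat.cast_ne_zero.2 (NeZero.ne n)) (measure_ball_pos _ _ one_pos).ne'

instance : IsProbabilityMeasure (sphereProb n) :=
  ⟨by rw [sphereProb, Measure.smul_apply, smul_eq_mul,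
    ENNReal.inv_mul_cancel toSphere_univ_ne_zero (measure_ne_top _ _)]⟩

theorem integral_toSphere_eq_mul_integral_sphereProb
    (f : sphere (0 : EuclideanSpace ℝ (Fin n)) 1 → ℝ) :
    ∫ u, f u ∂(volume : Measure (EuclideanSpace ℝ (Fin n))).toSphere
      = n * volume.real (closedBall (0 : EuclideanSpace ℝ (Fin n)) 1) *
        ∫ u, f u ∂sphereProb n := by
  have hc : (volume : Measure (EuclideanSpace ℝ (Fin n))).toSphere.real univ ≠ 0 :=
    ENNReal.toReal_ne_zero.2 ⟨toSphere_univ_ne_zero, measure_ne_top _ _⟩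
  have hreal : (volume : Measure (EuclideanSpace ℝ (Fin n))).toSphere.real univ
      = n * volume.real (closedBall (0 : EuclideanSpace ℝ (Fin n)) 1) := by
    rw [Measure.toSphere_real_apply_univ, finrank_euclideanSpace_fin,
      Measure.addHaar_real_closedBall_eq_addHaar_real_ball]
  rw [← hreal, sphereProb, integral_smul_measure, ENNReal.toReal_inv, smul_eq_mul, ← mul_assoc,
    ← measureReal_def, mul_inv_cancel₀ hc, one_mul]

theorem Continuous.integrable_sphereProb {f : sphere (0 : EuclideanSpace ℝ (Fin n)) 1 → ℝ}
    (hf : Continuous f) : Integrable f (sphereProb n) :=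
  hf.integrable_of_hasCompactSupport (HasCompactSupport.of_compactSpace f)

end SphereMeasure

theorem integrableOn_norm_rpow_of_isCompact {E : Type*} [NormedAddCommGroup E] [MeasurableSpace E]
    [BorelSpace E] {μ : Measure E} [IsFiniteMeasureOnCompacts μ] {s : Set E} (hs : IsCompact s)
    (h0 : (0 : E) ∉ s) (p : ℝ) :
    IntegrableOn (fun x => ‖x‖ ^ p) s μ :=
  ContinuousOn.integrableOn_compact hs <| continuous_norm.continuousOn.rpow_const fun _ hx =>
    Or.inl (norm_ne_zero_iff.2 fun h => h0 (h ▸ hx))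

section ConvexBody

variable {E : Type*} [NormedAddCommGroup E] [NormedSpace ℝ E]

/-- The class `𝒦₀(E)` of convex bodies containing the origin in their interior. -/
structure IsConvexBody₀ (K : Set E) : Prop where
  isCompact : IsCompact K
  convex : Convex ℝ K
  zero_mem_interior : (0 : E) ∈ interior K

namespace IsConvexBody₀

variable {K L : Set E}

theorem inter (hK : IsConvexBody₀ K) (hL : IsConvexBody₀ L) : IsConvexBody₀ (K ∩ L) where
  isCompact := hK.isCompact.inter_right hL.isCompact.isClosed
  convex := hK.convex.inter hL.convex
  zero_mem_interior := by rw [interior_inter]; exact ⟨hK.zero_mem_interior, hL.zero_mem_interior⟩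

theorem mem_nhds_zero (hK : IsConvexBody₀ K) : K ∈ nhds (0 : E) :=
  mem_interior_iff_mem_nhds.1 hK.zero_mem_interior

theorem gauge_pos (hK : IsConvexBody₀ K) {u : E} (hu : u ≠ 0) : 0 < gauge K u :=
  (_root_.gauge_pos (absorbent_nhds_zero hK.mem_nhds_zero)
    (NormedSpace.isVonNBounded_of_isBounded _ hK.isCompact.isBounded)).2 hu

theorem smul_mem_iff_le_inv_gauge (hK : IsConvexBody₀ K) {u : E} (hu : u ≠ 0) {r : ℝ}
    (hr : 0 ≤ r) : r • u ∈ K ↔ r ≤ (gauge K u)⁻¹ := by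
  have hmem : r • u ∈ K ↔ gauge K (r • u) ≤ 1 := by
    rw [gauge_le_one_iff_mem_closure hK.convex hK.mem_nhds_zero, hK.isCompact.isClosed.closure_eq]
  rw [hmem, gauge_smul_of_nonneg hr, smul_eq_mul, ← le_div_iff₀ (hK.gauge_pos hu), one_div]

theorem isGreatest_inv_gauge (hK : IsConvexBody₀ K) {u : E} (hu : u ≠ 0) :
    IsGreatest {r : ℝ | r • u ∈ K} (gauge K u)⁻¹ := by
  have hg := hK.gauge_pos hu
  refine ⟨(hK.smul_mem_iff_le_inv_gauge hu (by positivity)).2 le_rfl, fun r hr => ?_⟩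
  rcases le_or_gt 0 r with h0 | h0
  · exact (hK.smul_mem_iff_le_inv_gauge hu h0).1 hr
  · exact h0.le.trans (by positivity)

theorem exists_ball_subset (hK : IsConvexBody₀ K) : ∃ ε > 0, ball (0 : E) ε ⊆ K :=
  Metric.mem_nhds_iff.1 hK.mem_nhds_zero

end IsConvexBody₀

theorem IsConvexBody₀.integrableOn_symmDiff_norm_rpow [MeasurableSpace E] [BorelSpace E]
    {μ : Measure E} [IsFiniteMeasureOnCompacts μ] {K L : Set E} (hK : IsConvexBody₀ K)
    (hL : IsConvexBody₀ L) (p : ℝ) : IntegrableOn (fun x => ‖x‖ ^ p) (symmDiff K L) μ := by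
  obtain ⟨ε, hε, hball⟩ := (hK.inter hL).exists_ball_subset
  refine (integrableOn_norm_rpow_of_isCompact ((hK.isCompact.union hL.isCompact).diff isOpen_ball)
    (fun h => h.2 (mem_ball_self hε)) p).mono_set ?_
  rw [symmDiff_eq_sup_sdiff_inf]
  exact sdiff_subset_sdiff_right hball

end ConvexBody

section RadialFunction

variable {n : ℕ} {K L : Set (EuclideanSpace ℝ (Fin n))} {u : EuclideanSpace ℝ (Fin n)}

theorem IsConvexBody₀.radialFn_eq_inv_gauge (hK : IsConvexBody₀ K) (hu : u ≠ 0) :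
    radialFn K u = (gauge K u)⁻¹ :=
  (hK.isGreatest_inv_gauge hu).csSup_eq

theorem IsConvexBody₀.radialFn_pos (hK : IsConvexBody₀ K) (hu : u ≠ 0) : 0 < radialFn K u := by
  rw [hK.radialFn_eq_inv_gauge hu]
  exact inv_pos.2 (hK.gauge_pos hu)

theorem IsConvexBody₀.smul_mem_iff_le_radialFn (hK : IsConvexBody₀ K) (hu : u ≠ 0) {r : ℝ}
    (hr : 0 ≤ r) : r • u ∈ K ↔ r ≤ radialFn K u := by
  rw [hK.radialFn_eq_inv_gauge hu]
  exact hK.smul_mem_iff_le_inv_gauge hu hr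

theorem IsConvexBody₀.radialFn_inter (hK : IsConvexBody₀ K) (hL : IsConvexBody₀ L) (hu : u ≠ 0) :
    radialFn (K ∩ L) u = min (radialFn K u) (radialFn L u) := by
  have hle : ∀ r, 0 ≤ r → (r ≤ radialFn (K ∩ L) u ↔ r ≤ min (radialFn K u) (radialFn L u)) :=
    fun r hr => by
      rw [← (hK.inter hL).smul_mem_iff_le_radialFn hu hr, le_min_iff,
        ← hK.smul_mem_iff_le_radialFn hu hr, ← hL.smul_mem_iff_le_radialFn hu hr, mem_inter_iff]
  exact le_antisymm ((hle _ ((hK.inter hL).radialFn_pos hu).le).1 le_rfl)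
    ((hle _ (le_min (hK.radialFn_pos hu).le (hL.radialFn_pos hu).le)).2 le_rfl)

theorem IsConvexBody₀.smul_mem_symmDiff_iff (hK : IsConvexBody₀ K) (hL : IsConvexBody₀ L)
    (hu : u ≠ 0) {r : ℝ} (hr : 0 ≤ r) :
    r • u ∈ symmDiff K L ↔ r ∈ Ioc (min (radialFn K u) (radialFn L u))
      (max (radialFn K u) (radialFn L u)) := by
  rw [mem_symmDiff, hK.smul_mem_iff_le_radialFn hu hr, hL.smul_mem_iff_le_radialFn hu hr,
    mem_Ioc, min_lt_iff, le_max_iff, not_le, not_le]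
  grind

theorem IsConvexBody₀.continuous_radialFn (hK : IsConvexBody₀ K) :
    Continuous fun u : sphere (0 : EuclideanSpace ℝ (Fin n)) 1 => radialFn K u := by
  simp_rw [fun u => hK.radialFn_eq_inv_gauge (ne_zero_of_mem_unit_sphere u)]
  exact ((continuous_gauge hK.convex hK.mem_nhds_zero).comp continuous_subtype_val).inv₀
    fun u => (hK.gauge_pos (ne_zero_of_mem_unit_sphere u)).ne'

end RadialFunction

theorem IsConvexBody₀.integral_symmDiff_norm_rpow {n : ℕ} [NeZero n]
    {K L : Set (EuclideanSpace ℝ (Fin n))} (hK : IsConvexBody₀ K) (hL : IsConvexBody₀ L) {q : ℝ}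
    (hq : q ≠ 0) :
    ∫ x in symmDiff K L, ‖x‖ ^ (q - n)
      = n * volume.real (closedBall (0 : EuclideanSpace ℝ (Fin n)) 1) *
        ∫ u : sphere (0 : EuclideanSpace ℝ (Fin n)) 1,
          (max (radialFn K u) (radialFn L u) ^ q - min (radialFn K u) (radialFn L u) ^ q) / q
          ∂sphereProb n := by
  have hmeas : MeasurableSet (symmDiff K L) :=
    hK.isCompact.isClosed.measurableSet.symmDiff hL.isCompact.isClosed.measurableSet
  rw [← integral_indicator hmeas, integral_eq_integral_toSphere_integral_Ioi volume
    ((hK.integrableOn_symmDiff_norm_rpow hL _).integrable_indicator hmeas),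
    finrank_euclideanSpace_fin, integral_toSphere_eq_mul_integral_sphereProb]
  congr 1
  refine integral_congr_ae (ae_of_all _ fun u => ?_)
  have hu := ne_zero_of_mem_unit_sphere u
  have hm : 0 < min (radialFn K u) (radialFn L u) :=
    lt_min (hK.radialFn_pos hu) (hL.radialFn_pos hu)
  dsimp only
  rw [← integral_Ioc_rpow_sub_one hm min_le_max hq,
    ← inter_eq_right.2 fun r (hr : r ∈ Ioc _ _) => mem_Ioi.2 (hm.trans hr.1),
    ← setIntegral_indicator measurableSet_Ioc]
  refine setIntegral_congr_fun measurableSet_Ioi fun r (hr : 0 < r) => ?_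
  by_cases hmem : r ∈ Ioc (min (radialFn K u) (radialFn L u)) (max (radialFn K u) (radialFn L u))
  · rw [indicator_of_mem ((hK.smul_mem_symmDiff_iff hL hu hr.le).2 hmem), indicator_of_mem hmem,
      smul_eq_mul, norm_smul, norm_eq_of_mem_sphere u, mul_one, Real.norm_of_nonneg hr.le,
      ← Real.rpow_natCast, ← Real.rpow_add hr, Nat.cast_sub NeZero.one_le, Nat.cast_one]
    ring_nf
  · rw [indicator_of_notMem (mt (hK.smul_mem_symmDiff_iff hL hu hr.le).1 hmem),
      indicator_of_notMem hmem, smul_zero]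

theorem IsConvexBody₀.integral_rpow_max_sub_rpow_min {n : ℕ}
    {K L : Set (EuclideanSpace ℝ (Fin n))} (hK : IsConvexBody₀ K) (hL : IsConvexBody₀ L) (q : ℝ) :
    ∫ u : sphere (0 : EuclideanSpace ℝ (Fin n)) 1,
        (max (radialFn K u) (radialFn L u) ^ q - min (radialFn K u) (radialFn L u) ^ q)
        ∂sphereProb n
      = SignType.sign q * ∫ u : sphere (0 : EuclideanSpace ℝ (Fin n)) 1,
          |radialFn K u ^ q - radialFn L u ^ q| ∂sphereProb n := by
  rw [← integral_const_mul]
  refine integral_congr_ae (ae_of_all _ fun u => ?_)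
  have hu := ne_zero_of_mem_unit_sphere u
  exact rpow_max_sub_rpow_min (hK.radialFn_pos hu) (hL.radialFn_pos hu) q

theorem IsConvexBody₀.dualVol_add_dualVol_sub_two_mul_dualVol_inter {n : ℕ} [NeZero n]
    {K L : Set (EuclideanSpace ℝ (Fin n))} (hK : IsConvexBody₀ K) (hL : IsConvexBody₀ L) (q : ℝ) :
    dualVol n q K + dualVol n q L - 2 * dualVol n q (K ∩ L)
      = Vball n |q| * ∫ u : sphere (0 : EuclideanSpace ℝ (Fin n)) 1,
          (max (radialFn K u) (radialFn L u) ^ q - min (radialFn K u) (radialFn L u) ^ q)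
          ∂sphereProb n := by
  have hu := ne_zero_of_mem_unit_sphere (E := EuclideanSpace ℝ (Fin n))
  have hint : ∀ {M : Set (EuclideanSpace ℝ (Fin n))}, IsConvexBody₀ M →
      Integrable (fun u : sphere (0 : EuclideanSpace ℝ (Fin n)) 1 => radialFn M u ^ q)
        (sphereProb n) := fun hM =>
    (hM.continuous_radialFn.rpow_const fun u =>
      Or.inl (hM.radialFn_pos (hu u)).ne').integrable_sphereProb
  have hpt : ∀ u : sphere (0 : EuclideanSpace ℝ (Fin n)) 1,
      radialFn K u ^ q + radialFn L u ^ q - 2 * radialFn (K ∩ L) u ^ q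
        = max (radialFn K u) (radialFn L u) ^ q - min (radialFn K u) (radialFn L u) ^ q := by
    intro u
    rw [hK.radialFn_inter hL (hu u), ← apply_max_add_apply_min (· ^ q)]
    ring
  rw [← integral_congr_ae (ae_of_all _ hpt), integral_sub, integral_add, integral_const_mul]
  · simp only [dualVol]
    ring
  exacts [hint hK, hint hL, (hint hK).add (hint hL), (hint (hK.inter hL)).const_mul 2]

theorem stmt4_general {n : ℕ}
    (K L : Set (EuclideanSpace ℝ (Fin n)))
    (hKcp : IsCompact K) (hKcv : Convex ℝ K) (hKint : 0 ∈ interior K)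
    (hLcp : IsCompact L) (hLcv : Convex ℝ L) (hLint : 0 ∈ interior L)
    (q : ℝ) (hq0 : 0 < |q|) (hqn : |q| ≤ n) :
    |dualVol n q K + dualVol n q L - 2 * dualVol n q (K ∩ L)|
      = Vball n |q| * ∫ u : Metric.sphere (0 : EuclideanSpace ℝ (Fin n)) 1,
          |radialFn K ↑u ^ q - radialFn L ↑u ^ q| ∂(sphereProb n)
    ∧ Vball n |q| * (∫ u : Metric.sphere (0 : EuclideanSpace ℝ (Fin n)) 1,
          |radialFn K ↑u ^ q - radialFn L ↑u ^ q| ∂(sphereProb n))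
      = (|q| * Vball n |q| /
          ((n : ℝ) * (volume (Metric.closedBall (0 : EuclideanSpace ℝ (Fin n)) 1)).toReal)) *
          ∫ x in symmDiff K L, ‖x‖ ^ (q - (n : ℝ))
    ∧ (0 < q → 0 ≤ dualVol n q K + dualVol n q L - 2 * dualVol n q (K ∩ L)) := by
  have hn : (n : ℝ) ≠ 0 := (hq0.trans_le hqn).ne'
  have : NeZero n := ⟨Nat.cast_ne_zero.1 hn⟩
  have hK : IsConvexBody₀ K := ⟨hKcp, hKcv, hKint⟩
  have hL : IsConvexBody₀ L := ⟨hLcp, hLcv, hLint⟩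
  have hq : q ≠ 0 := abs_pos.1 hq0
  set I := ∫ u : sphere (0 : EuclideanSpace ℝ (Fin n)) 1,
    |radialFn K u ^ q - radialFn L u ^ q| ∂sphereProb n
  have hsign := hK.integral_rpow_max_sub_rpow_min hL q
  have hdev := hK.dualVol_add_dualVol_sub_two_mul_dualVol_inter hL q
  rw [hsign] at hdev
  have hV : 0 < Vball n |q| := Vball_pos (abs_nonneg q) hqn
  have hI : 0 ≤ I := integral_nonneg fun _ => abs_nonneg _
  refine ⟨?_, ?_, fun hqpos => ?_⟩
  · rw [hdev, abs_mul, abs_mul, abs_of_pos hV, abs_coe_sign_of_ne_zero hq, abs_of_nonneg hI,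
      one_mul]
  · have hB : volume.real (closedBall (0 : EuclideanSpace ℝ (Fin n)) 1) ≠ 0 :=
      ENNReal.toReal_ne_zero.2 ⟨(measure_closedBall_pos _ _ one_pos).ne',
        measure_closedBall_lt_top.ne⟩
    have hI' : SignType.sign q * I / q = I / |q| := by
      rw [div_eq_div_iff hq (abs_ne_zero.2 hq)]
      linear_combination I * sign_mul_abs q
    rw [← measureReal_def, hK.integral_symmDiff_norm_rpow hL hq, integral_div, hsign, hI']
    field_simp
  · rw [hdev, sign_pos hqpos, SignType.coe_one, one_mul]
    positivity

/-- For convex bodies `K, L ⊆ ℝⁿ` (`n ≥ 2`) containing the origin in their interiors and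
`0 < |q| ≤ n`:
`|Ṽ_q(K) + Ṽ_q(L) - 2Ṽ_q(K∩L)| = V_{|q|}(Dₙ) ∫_{S^{n-1}} |ρ_K^q - ρ_L^q| dσ`
`= (|q| V_{|q|}(Dₙ)/(n |Dₙ|)) ∫_{K △ L} ‖x‖^{q-n} dx`, and the dual volume deviation is
nonnegative when `q > 0`. -/
theorem stmt4 {n : ℕ} (hn : 2 ≤ n)
    (K L : Set (EuclideanSpace ℝ (Fin n)))
    (hKcp : IsCompact K) (hKcv : Convex ℝ K) (hKint : 0 ∈ interior K)
    (hLcp : IsCompact L) (hLcv : Convex ℝ L) (hLint : 0 ∈ interior L)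
    (q : ℝ) (hq0 : 0 < |q|) (hqn : |q| ≤ n) :
    |dualVol n q K + dualVol n q L - 2 * dualVol n q (K ∩ L)|
      = Vball n |q| * ∫ u : Metric.sphere (0 : EuclideanSpace ℝ (Fin n)) 1,
          |radialFn K ↑u ^ q - radialFn L ↑u ^ q| ∂(sphereProb n)
    ∧ Vball n |q| * (∫ u : Metric.sphere (0 : EuclideanSpace ℝ (Fin n)) 1,
          |radialFn K ↑u ^ q - radialFn L ↑u ^ q| ∂(sphereProb n))
      = (|q| * Vball n |q| /
          ((n : ℝ) * (volume (Metric.closedBall (0 : EuclideanSpace ℝ (Fin n)) 1)).toReal)) *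
          ∫ x in symmDiff K L, ‖x‖ ^ (q - (n : ℝ))
    ∧ (0 < q → 0 ≤ dualVol n q K + dualVol n q L - 2 * dualVol n q (K ∩ L)) :=
  stmt4_general K L hKcp hKcv hKint hLcp hLcv hLint q hq0 hqn
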